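/- Let v ∈ V and let w be a string of terminals with T(v) →* w in the stack grammar. Then for every stack σ whose top element is v, w can be executed legally starting from σ, the resulting stack is σ with its top removed, and after every proper prefix of w the current stack has σ-with-top-removed as a proper suffix (in particular the stack is strictly larger than σ-with-top-removed). -/

import Mathlib

/-- τ1 ∼ τ2 : the two sequences admit exactly the same legal continuations. -/
def SpecEquiv {A : Type} (T : Set (List A)) (τ1 τ2 : List A) : Prop :=
  ∀ τ' : List A, τ1 ++ τ' ∈ T ↔ τ2 ++ τ' ∈ T

/-- A specification is anagram-agnostic if any two of its members that are
permutations of one another (anagrams) are equivalent. -/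
def AnagramAgnostic {A : Type} (T : Set (List A)) : Prop :=
  ∀ τ1 ∈ T, ∀ τ2 ∈ T, τ1.Perm τ2 → SpecEquiv T τ1 τ2

inductive StackOp (V : Type) : Type
  | push (v : V) : StackOp V
  | pop (v : V) : StackOp V
  | peek (v : V) : StackOp V
deriving DecidableEq

/-- Execution of stack sequences: `StackExec σ w σ'` holds when the sequence
`w` can be legally executed starting from stack `σ` (top at the head), ending
with stack `σ'`.  `push v` pushes `v`; `pop v` (resp. `peek v`) is enabled
only when the top is `v` and removes it (resp. leaves the stack unchanged). -/
inductive StackExec {V : Type} : List V → List (StackOp V) → List V → Prop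
  | nil (σ : List V) : StackExec σ [] σ
  | push {σ σ' : List V} {w : List (StackOp V)} (v : V) :
      StackExec (v :: σ) w σ' → StackExec σ (StackOp.push v :: w) σ'
  | pop {σ σ' : List V} {w : List (StackOp V)} (v : V) :
      StackExec σ w σ' → StackExec (v :: σ) (StackOp.pop v :: w) σ'
  | peek {σ σ' : List V} {w : List (StackOp V)} (v : V) :
      StackExec (v :: σ) w σ' → StackExec (v :: σ) (StackOp.peek v :: w) σ'

/-- The stack specification: sequences executable from the empty stack. -/
def TStack (V : Type) : Set (List (StackOp V)) :=
  {w | ∃ σ : List V, StackExec [] w σ}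

/-- Nonterminals of the stack grammar: `T0` is `T(ε)`, `Tv v` is `T(v)`,
`Pu v` is `Push(v)` and `Pe v` is `Peek(v)`. -/
inductive StackNT (V : Type) : Type
  | T0 : StackNT V
  | Tv (v : V) : StackNT V
  | Pu (v : V) : StackNT V
  | Pe (v : V) : StackNT V
deriving DecidableEq

/-- Grammar symbols: nonterminals (left) or terminals (right). -/
abbrev GSym (V : Type) : Type := StackNT V ⊕ StackOp V

/-- Productions of the stack grammar. -/
inductive StackProd {V : Type} : StackNT V → List (GSym V) → Prop
  | r1 (v : V) : StackProd StackNT.T0 [Sum.inl (StackNT.Pu v), Sum.inl (StackNT.Tv v)]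
  | r2 (v : V) : StackProd (StackNT.Tv v) [Sum.inl (StackNT.Pe v), Sum.inl (StackNT.Tv v)]
  | r3 (v : V) : StackProd (StackNT.Tv v) [Sum.inl StackNT.T0, Sum.inl (StackNT.Tv v)]
  | r4 (v : V) : StackProd (StackNT.Tv v) [Sum.inr (StackOp.pop v)]
  | r5 (v : V) : StackProd (StackNT.Pu v) [Sum.inr (StackOp.push v)]
  | r6 (v : V) : StackProd (StackNT.Pe v) [Sum.inr (StackOp.peek v)]

/-- One rewriting step of the stack grammar. -/
def StackStep {V : Type} (x y : List (GSym V)) : Prop :=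
  ∃ (p s : List (GSym V)) (A : StackNT V) (rhs : List (GSym V)),
    StackProd A rhs ∧ x = p ++ Sum.inl A :: s ∧ y = p ++ rhs ++ s

/-- Derivation relation `→*` of the stack grammar. -/
def StackDerives {V : Type} : List (GSym V) → List (GSym V) → Prop :=
  Relation.ReflTransGen StackStep

/-- The language of the stack grammar: strings of terminals derivable from
the start symbol `T(ε)`. -/
def StackLang (V : Type) : Set (List (StackOp V)) :=
  {w | StackDerives [Sum.inl StackNT.T0] (w.map Sum.inr)}

section Aux
variable {V : Type}

/-- Spec of `T(v)`. -/
def Sv (v : V) (w : List (StackOp V)) : Prop :=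
  ∀ rest : List V,
    StackExec (v :: rest) w rest ∧
    (∀ p : List (StackOp V), ∀ σ' : List V,
      p <+: w → p ≠ w → StackExec (v :: rest) p σ' →
        rest <:+ σ' ∧ σ' ≠ rest)

/-- Spec of `T(ε)`. -/
def S0 (w : List (StackOp V)) : Prop :=
  ∀ σ : List V,
    StackExec σ w σ ∧
    (∀ p : List (StackOp V), ∀ σ' : List V,
      p <+: w → p ≠ w → p ≠ [] → StackExec σ p σ' →
        σ <:+ σ' ∧ σ' ≠ σ)

def Sem : GSym V → List (StackOp V) → Prop
  | Sum.inl StackNT.T0, w => S0 w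
  | Sum.inl (StackNT.Tv v), w => Sv v w
  | Sum.inl (StackNT.Pu v), w => w = [StackOp.push v]
  | Sum.inl (StackNT.Pe v), w => w = [StackOp.peek v]
  | Sum.inr op, w => w = [op]

inductive SemL : List (GSym V) → List (StackOp V) → Prop
  | nil : SemL [] []
  | cons {s : GSym V} {xs : List (GSym V)} {w1 w2 : List (StackOp V)} :
      Sem s w1 → SemL xs w2 → SemL (s :: xs) (w1 ++ w2)

lemma SemL_append {a b : List (GSym V)} {w1 w2 : List (StackOp V)}
    (h1 : SemL a w1) (h2 : SemL b w2) : SemL (a ++ b) (w1 ++ w2) := by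
  induction h1 with
  | nil => simpa using h2
  | cons hs _ ih => simpa [List.append_assoc] using SemL.cons hs ih

lemma SemL_split {a b : List (GSym V)} {w : List (StackOp V)}
    (h : SemL (a ++ b) w) :
    ∃ w1 w2, w = w1 ++ w2 ∧ SemL a w1 ∧ SemL b w2 := by
  induction a generalizing w with
  | nil => exact ⟨[], w, rfl, SemL.nil, h⟩
  | cons s xs ih =>
    cases h with
    | cons hs hrest =>
      obtain ⟨u1, u2, rfl, hu1, hu2⟩ := ih hrest
      exact ⟨_ ++ u1, u2, by simp, SemL.cons hs hu1, hu2⟩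

lemma SemL_map_inr (w : List (StackOp V)) : SemL (w.map Sum.inr) w := by
  induction w with
  | nil => exact SemL.nil
  | cons op w ih =>
    have : Sem (V := V) (Sum.inr op) [op] := rfl
    simpa using SemL.cons this ih

lemma exec_append {σ σ'' σ' : List V} {a b : List (StackOp V)}
    (h1 : StackExec σ a σ'') (h2 : StackExec σ'' b σ') :
    StackExec σ (a ++ b) σ' := by
  induction h1 with
  | nil => simpa using h2
  | push v _ ih => exact StackExec.push v (ih h2)
  | pop v _ ih => exact StackExec.pop v (ih h2)
  | peek v _ ih => exact StackExec.peek v (ih h2)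

lemma exec_split {σ σ' : List V} {a b : List (StackOp V)}
    (h : StackExec σ (a ++ b) σ') :
    ∃ σm, StackExec σ a σm ∧ StackExec σm b σ' := by
  induction a generalizing σ with
  | nil => exact ⟨σ, StackExec.nil σ, h⟩
  | cons op a ih =>
    cases h with
    | push v h' =>
      obtain ⟨σm, h1, h2⟩ := ih h'
      exact ⟨σm, StackExec.push v h1, h2⟩
    | pop v h' =>
      obtain ⟨σm, h1, h2⟩ := ih h'
      exact ⟨σm, StackExec.pop v h1, h2⟩
    | peek v h' =>
      obtain ⟨σm, h1, h2⟩ := ih h'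
      exact ⟨σm, StackExec.peek v h1, h2⟩

lemma exec_det {σ σ1 σ2 : List V} {w : List (StackOp V)}
    (h1 : StackExec σ w σ1) (h2 : StackExec σ w σ2) : σ1 = σ2 := by
  induction h1 generalizing σ2 with
  | nil => cases h2; rfl
  | push v _ ih => cases h2 with | push _ h' => exact ih h'
  | pop v _ ih => cases h2 with | pop _ h' => exact ih h'
  | peek v _ ih => cases h2 with | peek _ h' => exact ih h'

lemma prefix_split {α : Type*} {p a b : List α} (h : p <+: a ++ b) :
    p <+: a ∨ ∃ q, p = a ++ q ∧ q <+: b := by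
  rcases le_or_gt p.length a.length with hl | hl
  · exact Or.inl (List.prefix_of_prefix_length_le h (a.prefix_append b) hl)
  · have ha : a <+: p :=
      List.prefix_of_prefix_length_le (a.prefix_append b) h hl.le
    obtain ⟨q, rfl⟩ := ha
    obtain ⟨t, ht⟩ := h
    refine Or.inr ⟨q, rfl, t, ?_⟩
    have := ht
    rw [List.append_assoc] at this
    exact (List.append_cancel_left this)

/-- r1: T0 → Pu v · Tv v. -/
lemma sem_r1 {v : V} {w2 : List (StackOp V)} (h2 : Sv v w2) :
    S0 (StackOp.push v :: w2) := by
  intro σ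
  obtain ⟨hex, hpre⟩ := h2 σ
  refine ⟨StackExec.push v hex, ?_⟩
  intro p σ' hp hne hnil hexp
  match p, hp with
  | [], _ => exact absurd rfl hnil
  | op :: q, hp =>
    obtain ⟨t, ht⟩ := hp
    have ht' : op :: (q ++ t) = StackOp.push v :: w2 := by simpa using ht
    injection ht' with hop hqt
    subst hop
    have hq : q <+: w2 := ⟨t, hqt⟩
    have hqne : q ≠ w2 := by rintro rfl; simp at hqt; subst hqt; exact hne (by simp)
    cases hexp with
    | push _ h' => exact hpre q σ' hq hqne h'

/-- r2: Tv v → Pe v · Tv v. -/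
lemma sem_r2 {v : V} {w2 : List (StackOp V)} (h2 : Sv v w2) :
    Sv v (StackOp.peek v :: w2) := by
  intro rest
  obtain ⟨hex, hpre⟩ := h2 rest
  refine ⟨StackExec.peek v hex, ?_⟩
  intro p σ' hp hne hexp
  match p, hp with
  | [], _ =>
    cases hexp
    exact ⟨List.suffix_cons v rest, by simp⟩
  | op :: q, hp =>
    obtain ⟨t, ht⟩ := hp
    have ht' : op :: (q ++ t) = StackOp.peek v :: w2 := by simpa using ht
    injection ht' with hop hqt
    subst hop
    have hq : q <+: w2 := ⟨t, hqt⟩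
    have hqne : q ≠ w2 := by rintro rfl; simp at hqt; subst hqt; exact hne (by simp)
    cases hexp with
    | peek _ h' => exact hpre q σ' hq hqne h'

/-- r3: Tv v → T0 · Tv v. -/
lemma sem_r3 {v : V} {w1 w2 : List (StackOp V)} (h1 : S0 w1) (h2 : Sv v w2) :
    Sv v (w1 ++ w2) := by
  intro rest
  obtain ⟨hex1, hpre1⟩ := h1 (v :: rest)
  obtain ⟨hex2, hpre2⟩ := h2 rest
  refine ⟨exec_append hex1 hex2, ?_⟩
  intro p σ' hp hne hexp
  rcases prefix_split hp with hp1 | ⟨q, rfl, hq⟩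
  · rcases eq_or_ne p w1 with rfl | hpne
    · have : σ' = v :: rest := exec_det hexp hex1
      subst this
      exact ⟨List.suffix_cons v rest, by simp⟩
    · rcases eq_or_ne p ([] : List (StackOp V)) with rfl | hpnil
      · cases hexp
        exact ⟨List.suffix_cons v rest, by simp⟩
      · obtain ⟨hsuf, hne'⟩ := hpre1 p σ' hp1 hpne hpnil hexp
        refine ⟨(List.suffix_cons v rest).trans hsuf, ?_⟩
        rintro rfl
        exact absurd (List.Sublist.length_le hsuf.sublist) (by simp)
  · obtain ⟨σm, hqa, hqb⟩ := exec_split hexp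
    have : σm = v :: rest := exec_det hqa hex1
    subst this
    have hqne : q ≠ w2 := by rintro rfl; exact hne rfl
    exact hpre2 q σ' hq hqne hqb

/-- r4: Tv v → pop v. -/
lemma sem_r4 (v : V) : Sv v [StackOp.pop v] := by
  intro rest
  refine ⟨StackExec.pop v (StackExec.nil rest), ?_⟩
  intro p σ' hp hne hexp
  have hpnil : p = [] := by
    obtain ⟨t, ht⟩ := hp
    cases p with
    | nil => rfl
    | cons a q =>
      have ht' : a :: (q ++ t) = [StackOp.pop v] := by simpa using ht
      injection ht' with ha hqt
      subst ha
      rcases List.append_eq_nil_iff.mp hqt with ⟨rfl, rfl⟩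
      exact absurd rfl hne
  subst hpnil
  cases hexp
  exact ⟨List.suffix_cons v rest, by simp⟩

lemma sem_of_prod {A : StackNT V} {rhs : List (GSym V)} {w : List (StackOp V)}
    (hprod : StackProd A rhs) (h : SemL rhs w) : Sem (Sum.inl A) w := by
  cases hprod with
  | r1 v =>
    rcases h with _ | ⟨h1, h⟩
    rcases h with _ | ⟨h2, h⟩
    cases h
    cases h1
    show S0 _
    simpa using sem_r1 h2
  | r2 v =>
    rcases h with _ | ⟨h1, h⟩
    rcases h with _ | ⟨h2, h⟩
    cases h
    cases h1
    show Sv _ _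
    simpa using sem_r2 h2
  | r3 v =>
    rcases h with _ | ⟨h1, h⟩
    rcases h with _ | ⟨h2, h⟩
    cases h
    show Sv _ _
    simpa using sem_r3 h1 h2
  | r4 v =>
    rcases h with _ | ⟨h1, h⟩
    cases h
    cases h1
    show Sv _ _
    simpa using sem_r4 v
  | r5 v =>
    rcases h with _ | ⟨h1, h⟩
    cases h
    cases h1
    show _ = _
    simp
  | r6 v =>
    rcases h with _ | ⟨h1, h⟩
    cases h
    cases h1
    show _ = _
    simp

lemma semL_of_step {x y : List (GSym V)} {w : List (StackOp V)}
    (hstep : StackStep x y) (h : SemL y w) : SemL x w := by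
  obtain ⟨p, s, A, rhs, hprod, rfl, rfl⟩ := hstep
  rw [List.append_assoc] at h
  obtain ⟨w1, w23, rfl, hw1, hw23⟩ := SemL_split (a := p) (b := rhs ++ s) h
  obtain ⟨w2, w3, rfl, hw2, hw3⟩ := SemL_split hw23
  have hA : Sem (Sum.inl A) w2 := sem_of_prod hprod hw2
  exact SemL_append hw1 (SemL.cons hA hw3)

lemma semL_of_derives {x : List (GSym V)} {w : List (StackOp V)}
    (h : StackDerives x (w.map Sum.inr)) : SemL x w := by
  induction h using Relation.ReflTransGen.head_induction_on with
  | refl => exact SemL_map_inr w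
  | head hstep _ ih => exact semL_of_step hstep ih

end Aux

theorem stmt13 {V : Type} (v : V) (w : List (StackOp V))
    (hw : StackDerives [Sum.inl (StackNT.Tv v)] (w.map Sum.inr)) :
    ∀ rest : List V,
      StackExec (v :: rest) w rest ∧
      (∀ p : List (StackOp V), ∀ σ' : List V,
        p <+: w → p ≠ w → StackExec (v :: rest) p σ' →
          rest <:+ σ' ∧ σ' ≠ rest) := by
  have h := semL_of_derives hw
  rcases h with _ | ⟨h1, h⟩
  cases h
  have : Sv v _ := h1
  simpa [Sv] using this
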